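/- Assume 0.9·d_{i0} ≤ d_i ≤ 1.1·d_{i0} for every i, 0.9·d_0 ≤ d ≤ 1.1·d_0, ρ ≥ d² + 2‖e‖², and 0 < ε ≤ 1/15. Then 𝒩_F̃ ⊆ 𝒩_d ∩ 𝒩_μ; that is, every pair (h,x) with F̃(h,x) ≤ ε²d_0²/(3sκ²) + ‖e‖² satisfies ‖h_i‖ ≤ 2√d_{i0}, ‖x_i‖ ≤ 2√d_{i0} and √L·‖Bh_i‖_∞ ≤ 4√d_{i0}·μ for all i = 1,…,s. -/

import Mathlib

noncomputable section
open Finset ComplexConjugate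

namespace RGD

/-- Squared Euclidean norm of a complex vector. -/
def vnormSq {n : ℕ} (v : Fin n → ℂ) : ℝ := ∑ j, ‖v j‖ ^ 2

/-- Euclidean norm of a complex vector. -/
def vnorm {n : ℕ} (v : Fin n → ℂ) : ℝ := Real.sqrt (vnormSq v)

/-- Inner product, conjugate-linear in the first argument. -/
def vinner {n : ℕ} (u v : Fin n → ℂ) : ℂ := ∑ j, conj (u j) * v j

/-- Squared Frobenius norm of a matrix. -/
def frobSq {K N : ℕ} (Z : Matrix (Fin K) (Fin N) ℂ) : ℝ := ∑ k, ∑ j, ‖Z k j‖ ^ 2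

/-- Frobenius norm of a matrix. -/
def frob {K N : ℕ} (Z : Matrix (Fin K) (Fin N) ℂ) : ℝ := Real.sqrt (frobSq Z)

/-- Frobenius inner product `⟨U,V⟩ = Tr(U*V)`, conjugate-linear in the first argument. -/
def finner {K N : ℕ} (U V : Matrix (Fin K) (Fin N) ℂ) : ℂ := ∑ k, ∑ j, conj (U k j) * V k j

/-- Spectral (operator) norm of a matrix: sup of `‖Zv‖` over the closed unit ball. -/
def opNorm {K N : ℕ} (Z : Matrix (Fin K) (Fin N) ℂ) : ℝ :=
  sSup {r : ℝ | ∃ v : Fin N → ℂ, vnorm v ≤ 1 ∧ r = vnorm (Z.mulVec v)}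

/-- Squared Frobenius norm of a block-diagonal matrix, given by its diagonal blocks. -/
def famFrobSq {K N s : ℕ} (Z : Fin s → Matrix (Fin K) (Fin N) ℂ) : ℝ := ∑ i, frobSq (Z i)

/-- Frobenius norm of a block-diagonal matrix, given by its diagonal blocks. -/
def famFrob {K N s : ℕ} (Z : Fin s → Matrix (Fin K) (Fin N) ℂ) : ℝ := Real.sqrt (famFrobSq Z)

/-- The rank-one matrix `u v*`. -/
def rankOne {K N : ℕ} (u : Fin K → ℂ) (v : Fin N → ℂ) : Matrix (Fin K) (Fin N) ℂ :=
  Matrix.of fun k j => u k * conj (v j)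

/-- `ℋ(h,x)`: block-diagonal matrix with `i`-th block `hᵢ xᵢ*`. -/
def Hmap {K N s : ℕ} (h : Fin s → Fin K → ℂ) (x : Fin s → Fin N → ℂ) :
    Fin s → Matrix (Fin K) (Fin N) ℂ := fun i => rankOne (h i) (x i)

/-- `𝒜ᵢ(Z) = (bₗ* Z aₗ)ₗ`. -/
def calAi {K N L : ℕ} (b : Fin L → Fin K → ℂ) (a : Fin L → Fin N → ℂ)
    (Z : Matrix (Fin K) (Fin N) ℂ) : Fin L → ℂ :=
  fun l => vinner (b l) (Z.mulVec (a l))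

/-- `𝒜(Z) = Σᵢ 𝒜ᵢ(Zᵢ)` on block-diagonal matrices. -/
def calA {K N L s : ℕ} (b : Fin L → Fin K → ℂ) (a : Fin s → Fin L → Fin N → ℂ)
    (Z : Fin s → Matrix (Fin K) (Fin N) ℂ) : Fin L → ℂ :=
  fun l => ∑ i, calAi b (a i) (Z i) l

/-- `𝒜ᵢ*(z) = Σₗ zₗ bₗ aₗ*`. -/
def calAdj {K N L : ℕ} (b : Fin L → Fin K → ℂ) (a : Fin L → Fin N → ℂ)
    (z : Fin L → ℂ) : Matrix (Fin K) (Fin N) ℂ :=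
  Matrix.of fun k j => ∑ l, z l * b l k * conj (a l j)

/-- `‖𝒜*(e)‖ = maxᵢ ‖𝒜ᵢ*(e)‖` (operator norms). -/
def AadjNorm {K N L s : ℕ} (b : Fin L → Fin K → ℂ) (a : Fin s → Fin L → Fin N → ℂ)
    (e : Fin L → ℂ) : ℝ :=
  ⨆ i : Fin s, opNorm (calAdj b (a i) e)

/-- `B*B = I_K`, expressed in terms of the columns `bₗ` of `B*`. -/
def BtBeqI {K L : ℕ} (b : Fin L → Fin K → ℂ) : Prop :=
  ∀ k k' : Fin K, (∑ l, b l k * conj (b l k')) = if k = k' then (1 : ℂ) else 0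

/-- `μ ≥ μ_h`, i.e. `√L ‖B h_{i0}‖_∞ ≤ μ ‖h_{i0}‖` for all `i`. -/
def muhLe {K L s : ℕ} (b : Fin L → Fin K → ℂ) (h0 : Fin s → Fin K → ℂ) (μ : ℝ) : Prop :=
  ∀ i l, Real.sqrt L * ‖vinner (b l) (h0 i)‖ ≤ μ * vnorm (h0 i)

/-- `d₀ = √(Σᵢ d_{i0}²)`. -/
def dtot {s : ℕ} (d0 : Fin s → ℝ) : ℝ := Real.sqrt (∑ i, d0 i ^ 2)

/-- Condition number `κ = (maxᵢ d_{i0}) / (minᵢ d_{i0})`. -/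
def kappa {s : ℕ} (d0 : Fin s → ℝ) : ℝ := (⨆ i, d0 i) / (⨅ i, d0 i)

/-- The observation `y = 𝒜(ℋ(h₀,x₀)) + e`. -/
def yvec {K N L s : ℕ} (b : Fin L → Fin K → ℂ) (a : Fin s → Fin L → Fin N → ℂ)
    (h0 : Fin s → Fin K → ℂ) (x0 : Fin s → Fin N → ℂ) (e : Fin L → ℂ) : Fin L → ℂ :=
  fun l => calA b a (Hmap h0 x0) l + e l

/-- `F(h,x) = ‖𝒜(ℋ(h,x)) − y‖²`. -/
def Fobj {K N L s : ℕ} (b : Fin L → Fin K → ℂ) (a : Fin s → Fin L → Fin N → ℂ)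
    (h0 : Fin s → Fin K → ℂ) (x0 : Fin s → Fin N → ℂ) (e : Fin L → ℂ)
    (h : Fin s → Fin K → ℂ) (x : Fin s → Fin N → ℂ) : ℝ :=
  vnormSq (fun l => calA b a (Hmap h x) l - yvec b a h0 x0 e l)

def G0 (z : ℝ) : ℝ := max (z - 1) 0 ^ 2

def G0' (z : ℝ) : ℝ := 2 * max (z - 1) 0

/-- The `i`-th regularizer `Gᵢ(hᵢ,xᵢ)` (including the factor `ρ`). -/
def Gi {K N L : ℕ} (b : Fin L → Fin K → ℂ) (ρ μ di : ℝ)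
    (hi : Fin K → ℂ) (xi : Fin N → ℂ) : ℝ :=
  ρ * (G0 (vnormSq hi / (2 * di)) + G0 (vnormSq xi / (2 * di))
    + ∑ l, G0 ((L : ℝ) * ‖vinner (b l) hi‖ ^ 2 / (8 * di * μ ^ 2)))

/-- The regularizer `G(h,x) = Σᵢ Gᵢ(hᵢ,xᵢ)`. -/
def Greg {K N L s : ℕ} (b : Fin L → Fin K → ℂ) (ρ μ : ℝ) (dd : Fin s → ℝ)
    (h : Fin s → Fin K → ℂ) (x : Fin s → Fin N → ℂ) : ℝ :=
  ∑ i, Gi b ρ μ (dd i) (h i) (x i)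

/-- `F̃ = F + G`. -/
def Ftil {K N L s : ℕ} (b : Fin L → Fin K → ℂ) (a : Fin s → Fin L → Fin N → ℂ)
    (h0 : Fin s → Fin K → ℂ) (x0 : Fin s → Fin N → ℂ) (e : Fin L → ℂ)
    (ρ μ : ℝ) (dd : Fin s → ℝ)
    (h : Fin s → Fin K → ℂ) (x : Fin s → Fin N → ℂ) : ℝ :=
  Fobj b a h0 x0 e h x + Greg b ρ μ dd h x

/-- The residual `𝒜(ℋ(h,x)) − y`. -/
def residual {K N L s : ℕ} (b : Fin L → Fin K → ℂ) (a : Fin s → Fin L → Fin N → ℂ)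
    (h0 : Fin s → Fin K → ℂ) (x0 : Fin s → Fin N → ℂ) (e : Fin L → ℂ)
    (h : Fin s → Fin K → ℂ) (x : Fin s → Fin N → ℂ) : Fin L → ℂ :=
  fun l => calA b a (Hmap h x) l - yvec b a h0 x0 e l

/-- Wirtinger gradient `∇F_{hᵢ} = 𝒜ᵢ*(𝒜(ℋ(h,x)) − y) xᵢ`. -/
def gradFh {K N L s : ℕ} (b : Fin L → Fin K → ℂ) (a : Fin s → Fin L → Fin N → ℂ)
    (h0 : Fin s → Fin K → ℂ) (x0 : Fin s → Fin N → ℂ) (e : Fin L → ℂ)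
    (h : Fin s → Fin K → ℂ) (x : Fin s → Fin N → ℂ) (i : Fin s) : Fin K → ℂ :=
  (calAdj b (a i) (residual b a h0 x0 e h x)).mulVec (x i)

/-- Wirtinger gradient `∇F_{xᵢ} = (𝒜ᵢ*(𝒜(ℋ(h,x)) − y))* hᵢ`. -/
def gradFx {K N L s : ℕ} (b : Fin L → Fin K → ℂ) (a : Fin s → Fin L → Fin N → ℂ)
    (h0 : Fin s → Fin K → ℂ) (x0 : Fin s → Fin N → ℂ) (e : Fin L → ℂ)
    (h : Fin s → Fin K → ℂ) (x : Fin s → Fin N → ℂ) (i : Fin s) : Fin N → ℂ :=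
  (calAdj b (a i) (residual b a h0 x0 e h x)).conjTranspose.mulVec (h i)

/-- Wirtinger gradient `∇G_{hᵢ}`. -/
def gradGh {K L s : ℕ} (b : Fin L → Fin K → ℂ) (ρ μ : ℝ) (dd : Fin s → ℝ)
    (h : Fin s → Fin K → ℂ) (i : Fin s) : Fin K → ℂ :=
  fun k => ((ρ / (2 * dd i) : ℝ) : ℂ) *
    (((G0' (vnormSq (h i) / (2 * dd i)) : ℝ) : ℂ) * h i k
      + (((L : ℝ) / (4 * μ ^ 2) : ℝ) : ℂ) *
        ∑ l, ((G0' ((L : ℝ) * ‖vinner (b l) (h i)‖ ^ 2 / (8 * dd i * μ ^ 2)) : ℝ) : ℂ)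
          * (vinner (b l) (h i) * b l k))

/-- Wirtinger gradient `∇G_{xᵢ}`. -/
def gradGx {N s : ℕ} (ρ : ℝ) (dd : Fin s → ℝ)
    (x : Fin s → Fin N → ℂ) (i : Fin s) : Fin N → ℂ :=
  fun j => ((ρ / (2 * dd i) : ℝ) : ℂ) * (((G0' (vnormSq (x i) / (2 * dd i)) : ℝ) : ℂ) * x i j)

/-- `∇F̃_{hᵢ} = ∇F_{hᵢ} + ∇G_{hᵢ}`. -/
def gradH {K N L s : ℕ} (b : Fin L → Fin K → ℂ) (a : Fin s → Fin L → Fin N → ℂ)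
    (h0 : Fin s → Fin K → ℂ) (x0 : Fin s → Fin N → ℂ) (e : Fin L → ℂ)
    (ρ μ : ℝ) (dd : Fin s → ℝ)
    (h : Fin s → Fin K → ℂ) (x : Fin s → Fin N → ℂ) (i : Fin s) : Fin K → ℂ :=
  fun k => gradFh b a h0 x0 e h x i k + gradGh b ρ μ dd h i k

/-- `∇F̃_{xᵢ} = ∇F_{xᵢ} + ∇G_{xᵢ}`. -/
def gradX {K N L s : ℕ} (b : Fin L → Fin K → ℂ) (a : Fin s → Fin L → Fin N → ℂ)
    (h0 : Fin s → Fin K → ℂ) (x0 : Fin s → Fin N → ℂ) (e : Fin L → ℂ)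
    (ρ μ : ℝ) (dd : Fin s → ℝ)
    (h : Fin s → Fin K → ℂ) (x : Fin s → Fin N → ℂ) (i : Fin s) : Fin N → ℂ :=
  fun j => gradFx b a h0 x0 e h x i j + gradGx ρ dd x i j

/-- `‖∇F̃(h,x)‖²` (squared norm of the stacked Wirtinger gradient). -/
def gradNormSq {K N L s : ℕ} (b : Fin L → Fin K → ℂ) (a : Fin s → Fin L → Fin N → ℂ)
    (h0 : Fin s → Fin K → ℂ) (x0 : Fin s → Fin N → ℂ) (e : Fin L → ℂ)
    (ρ μ : ℝ) (dd : Fin s → ℝ)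
    (h : Fin s → Fin K → ℂ) (x : Fin s → Fin N → ℂ) : ℝ :=
  ∑ i, vnormSq (gradH b a h0 x0 e ρ μ dd h x i) + ∑ i, vnormSq (gradX b a h0 x0 e ρ μ dd h x i)

/-- `‖∇F̃(h',x') − ∇F̃(h,x)‖²`. -/
def gradDiffNormSq {K N L s : ℕ} (b : Fin L → Fin K → ℂ) (a : Fin s → Fin L → Fin N → ℂ)
    (h0 : Fin s → Fin K → ℂ) (x0 : Fin s → Fin N → ℂ) (e : Fin L → ℂ)
    (ρ μ : ℝ) (dd : Fin s → ℝ)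
    (h : Fin s → Fin K → ℂ) (x : Fin s → Fin N → ℂ)
    (h' : Fin s → Fin K → ℂ) (x' : Fin s → Fin N → ℂ) : ℝ :=
  ∑ i, vnormSq (fun k => gradH b a h0 x0 e ρ μ dd h' x' i k - gradH b a h0 x0 e ρ μ dd h x i k)
  + ∑ i, vnormSq (fun j => gradX b a h0 x0 e ρ μ dd h' x' i j - gradX b a h0 x0 e ρ μ dd h x i j)

/-- Membership in `𝒩_d`. -/
def inNd {K N s : ℕ} (d0 : Fin s → ℝ)
    (h : Fin s → Fin K → ℂ) (x : Fin s → Fin N → ℂ) : Prop :=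
  ∀ i, vnorm (h i) ≤ 2 * Real.sqrt (d0 i) ∧ vnorm (x i) ≤ 2 * Real.sqrt (d0 i)

/-- Membership in `𝒩_μ`. -/
def inNmu {K L s : ℕ} (b : Fin L → Fin K → ℂ) (d0 : Fin s → ℝ) (μ : ℝ)
    (h : Fin s → Fin K → ℂ) : Prop :=
  ∀ i, ∀ l, Real.sqrt L * ‖vinner (b l) (h i)‖ ≤ 4 * Real.sqrt (d0 i) * μ

/-- `δᵢ(hᵢ,xᵢ) = ‖hᵢxᵢ* − h_{i0}x_{i0}*‖_F / d_{i0}`. -/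
def deltaI {K N : ℕ} (h0i : Fin K → ℂ) (x0i : Fin N → ℂ) (d0i : ℝ)
    (hi : Fin K → ℂ) (xi : Fin N → ℂ) : ℝ :=
  frob (rankOne hi xi - rankOne h0i x0i) / d0i

/-- Membership in `𝒩_ε`. -/
def inNeps {K N s : ℕ} (h0 : Fin s → Fin K → ℂ) (x0 : Fin s → Fin N → ℂ)
    (d0 : Fin s → ℝ) (ε : ℝ)
    (h : Fin s → Fin K → ℂ) (x : Fin s → Fin N → ℂ) : Prop :=
  ∀ i, deltaI (h0 i) (x0 i) (d0 i) (h i) (x i) ≤ ε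

/-- The global relative error `δ(h,x) = ‖ℋ(h,x) − X₀‖_F / d₀`. -/
def deltaTot {K N s : ℕ} (h0 : Fin s → Fin K → ℂ) (x0 : Fin s → Fin N → ℂ)
    (d0 : Fin s → ℝ)
    (h : Fin s → Fin K → ℂ) (x : Fin s → Fin N → ℂ) : ℝ :=
  famFrob (fun i => Hmap h x i - Hmap h0 x0 i) / dtot d0

/-- Membership in `𝒩_F̃`. -/
def inNF {K N L s : ℕ} (b : Fin L → Fin K → ℂ) (a : Fin s → Fin L → Fin N → ℂ)
    (h0 : Fin s → Fin K → ℂ) (x0 : Fin s → Fin N → ℂ) (e : Fin L → ℂ)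
    (d0 : Fin s → ℝ) (ρ μ : ℝ) (dd : Fin s → ℝ) (ε : ℝ)
    (h : Fin s → Fin K → ℂ) (x : Fin s → Fin N → ℂ) : Prop :=
  Ftil b a h0 x0 e ρ μ dd h x ≤ ε ^ 2 * dtot d0 ^ 2 / (3 * (s : ℝ) * kappa d0 ^ 2) + vnormSq e

/-- The Local Restricted Isometry Property on `𝒩_d ∩ 𝒩_μ ∩ 𝒩_ε`. -/
def LocalRIP {K N L s : ℕ} (b : Fin L → Fin K → ℂ) (a : Fin s → Fin L → Fin N → ℂ)
    (h0 : Fin s → Fin K → ℂ) (x0 : Fin s → Fin N → ℂ)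
    (d0 : Fin s → ℝ) (μ ε : ℝ) : Prop :=
  ∀ (h : Fin s → Fin K → ℂ) (x : Fin s → Fin N → ℂ),
    inNd d0 h x → inNmu b d0 μ h → inNeps h0 x0 d0 ε h x →
      (2 / 3) * famFrobSq (fun i => Hmap h x i - Hmap h0 x0 i)
          ≤ vnormSq (calA b a fun i => Hmap h x i - Hmap h0 x0 i)
      ∧ vnormSq (calA b a fun i => Hmap h x i - Hmap h0 x0 i)
          ≤ (3 / 2) * famFrobSq (fun i => Hmap h x i - Hmap h0 x0 i)

/-- `α_{i1} = ⟨h_{i0}, hᵢ⟩ / d_{i0}`. -/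
def alpha1 {K s : ℕ} (h0 : Fin s → Fin K → ℂ) (d0 : Fin s → ℝ)
    (h : Fin s → Fin K → ℂ) (i : Fin s) : ℂ :=
  vinner (h0 i) (h i) / ((d0 i : ℝ) : ℂ)

/-- `α_{i2} = ⟨x_{i0}, xᵢ⟩ / d_{i0}`. -/
def alpha2 {N s : ℕ} (x0 : Fin s → Fin N → ℂ) (d0 : Fin s → ℝ)
    (x : Fin s → Fin N → ℂ) (i : Fin s) : ℂ :=
  vinner (x0 i) (x i) / ((d0 i : ℝ) : ℂ)

/-- `δ₀ = δ/10`. -/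
def delta0 {K N s : ℕ} (h0 : Fin s → Fin K → ℂ) (x0 : Fin s → Fin N → ℂ)
    (d0 : Fin s → ℝ) (h : Fin s → Fin K → ℂ) (x : Fin s → Fin N → ℂ) : ℝ :=
  deltaTot h0 x0 d0 h x / 10

/-- `αᵢ = (1−δ₀)α_{i1}` if `‖hᵢ‖ ≥ ‖xᵢ‖`, else `1/((1−δ₀) conj(α_{i2}))`. -/
def alphaC {K N s : ℕ} (h0 : Fin s → Fin K → ℂ) (x0 : Fin s → Fin N → ℂ)
    (d0 : Fin s → ℝ) (h : Fin s → Fin K → ℂ) (x : Fin s → Fin N → ℂ) (i : Fin s) : ℂ :=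
  if vnorm (x i) ≤ vnorm (h i)
  then ((1 - delta0 h0 x0 d0 h x : ℝ) : ℂ) * alpha1 h0 d0 h i
  else 1 / (((1 - delta0 h0 x0 d0 h x : ℝ) : ℂ) * conj (alpha2 x0 d0 x i))

/-- `Δhᵢ = hᵢ − αᵢ h_{i0}`. -/
def dh {K N s : ℕ} (h0 : Fin s → Fin K → ℂ) (x0 : Fin s → Fin N → ℂ)
    (d0 : Fin s → ℝ) (h : Fin s → Fin K → ℂ) (x : Fin s → Fin N → ℂ) (i : Fin s) :
    Fin K → ℂ :=
  fun k => h i k - alphaC h0 x0 d0 h x i * h0 i k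

/-- `Δxᵢ = xᵢ − conj(αᵢ)⁻¹ x_{i0}`. -/
def dx {K N s : ℕ} (h0 : Fin s → Fin K → ℂ) (x0 : Fin s → Fin N → ℂ)
    (d0 : Fin s → ℝ) (h : Fin s → Fin K → ℂ) (x : Fin s → Fin N → ℂ) (i : Fin s) :
    Fin N → ℂ :=
  fun j => x i j - (conj (alphaC h0 x0 d0 h x i))⁻¹ * x0 i j

/-- `σ²_max(h,x) = maxₗ Σᵢ |bₗ*hᵢ|² ‖xᵢ‖²`. -/
def sigmaMaxSq {K N L s : ℕ} (b : Fin L → Fin K → ℂ)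
    (h : Fin s → Fin K → ℂ) (x : Fin s → Fin N → ℂ) : ℝ :=
  ⨆ l : Fin L, ∑ i, ‖vinner (b l) (h i)‖ ^ 2 * vnormSq (x i)

/-- The rank-one bound (Lemma: `𝒜` on block-diagonal matrices with rank-1 blocks). -/
def RankOneBound {K N L s : ℕ} (b : Fin L → Fin K → ℂ)
    (a : Fin s → Fin L → Fin N → ℂ) : Prop :=
  ∀ (h : Fin s → Fin K → ℂ) (x : Fin s → Fin N → ℂ),
    vnormSq (calA b a (Hmap h x)) ≤
      4 / 3 * famFrobSq (Hmap h x)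
      + 2 * Real.sqrt (2 * (s : ℝ) * famFrobSq (Hmap h x) * sigmaMaxSq b h x
          * ((K : ℝ) + N) * Real.log L)
      + 8 * (s : ℝ) * sigmaMaxSq b h x * ((K : ℝ) + N) * Real.log L

/-- The subspace `Tᵢ = {h_{i0} v* + u x_{i0}*}`. -/
def Tspace {K N : ℕ} (h0i : Fin K → ℂ) (x0i : Fin N → ℂ) :
    Set (Matrix (Fin K) (Fin N) ℂ) :=
  {Z | ∃ (u : Fin K → ℂ) (v : Fin N → ℂ), Z = rankOne h0i v + rankOne u x0i}

/-- `P` is the orthogonal projection onto `Tᵢ` w.r.t. the Frobenius inner product. -/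
def IsFrobProj {K N : ℕ} (h0i : Fin K → ℂ) (x0i : Fin N → ℂ)
    (P : Matrix (Fin K) (Fin N) ℂ → Matrix (Fin K) (Fin N) ℂ) : Prop :=
  ∀ Z, P Z ∈ Tspace h0i x0i ∧ ∀ W ∈ Tspace h0i x0i, finner W (Z - P Z) = 0

/-- Operator norm of `𝒜ᵢ` from `(ℂ^{K×N}, ‖·‖_F)` to `(ℂ^L, ‖·‖)`. -/
def calAiOpNorm {K N L : ℕ} (b : Fin L → Fin K → ℂ) (a : Fin L → Fin N → ℂ) : ℝ :=
  sSup {r : ℝ | ∃ Z : Matrix (Fin K) (Fin N) ℂ, frob Z ≤ 1 ∧ r = vnorm (calAi b a Z)}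

/-- Operator norm of `𝒜` from block-diagonal matrices with `‖·‖_F` to `ℂ^L`. -/
def calAOpNorm {K N L s : ℕ} (b : Fin L → Fin K → ℂ)
    (a : Fin s → Fin L → Fin N → ℂ) : ℝ :=
  sSup {r : ℝ | ∃ Z : Fin s → Matrix (Fin K) (Fin N) ℂ, famFrob Z ≤ 1 ∧ r = vnorm (calA b a Z)}

/-- Norm of a stacked vector in `ℂ^{ns}`. -/
def stackNorm {n s : ℕ} (u : Fin s → Fin n → ℂ) : ℝ := Real.sqrt (∑ i, vnormSq (u i))

/-- Norm of a point `z = (h,x) ∈ ℂ^{s(K+N)}`. -/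
def pairNorm {K N s : ℕ} (u : Fin s → Fin K → ℂ) (v : Fin s → Fin N → ℂ) : ℝ :=
  Real.sqrt (∑ i, vnormSq (u i) + ∑ i, vnormSq (v i))

/-- `z + t • w` componentwise, `t` real. -/
def shiftV {n s : ℕ} (u w : Fin s → Fin n → ℂ) (t : ℝ) : Fin s → Fin n → ℂ :=
  fun i k => u i k + (t : ℂ) * w i k

/-- `σ_max(h) = maxₗ √(Σᵢ |bₗ*hᵢ|²)` (unit `xᵢ`'s). -/
def sigmaMaxU {K L s : ℕ} (b : Fin L → Fin K → ℂ) (h : Fin s → Fin K → ℂ) : ℝ :=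
  ⨆ l, Real.sqrt (∑ i, ‖vinner (b l) (h i)‖ ^ 2)

/-!
A point of `𝒩_F̃` has `F̃ ≤ ε²d₀²/(3sκ²) + ‖e‖² ≤ d₀²/675 + ‖e‖²`, whereas each summand of the
regularizer is `ρ G₀(t)` with `ρ ≥ d² + 2‖e‖² ≥ 0.81 d₀² + 2‖e‖²`. Hence every argument `t` of `G₀`
in `G` stays below `20/11`, since otherwise `ρ G₀(t) ≥ (9/11)² ρ` would exceed `F̃`. Because
`dᵢ ≤ 1.1 d_{i0}`, the bound `t < 20/11 = 2/1.1` on the three kinds of arguments is exactly what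
`𝒩_d ∩ 𝒩_μ` requires.
-/

lemma vnormSq_nonneg {n : ℕ} (v : Fin n → ℂ) : 0 ≤ vnormSq v := by
  unfold vnormSq
  positivity

lemma vnorm_le_two_mul_sqrt {n : ℕ} {v : Fin n → ℂ} {c : ℝ} (hv : vnormSq v ≤ 4 * c) :
    vnorm v ≤ 2 * Real.sqrt c := by
  have hc : 0 ≤ c := by linarith [vnormSq_nonneg v]
  rw [vnorm, Real.sqrt_le_iff, mul_pow, Real.sq_sqrt hc]
  exact ⟨by positivity, by linarith⟩

lemma G0_nonneg (t : ℝ) : 0 ≤ G0 t := by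
  unfold G0
  positivity

lemma sq_sub_one_le_G0 {c t : ℝ} (hc : 1 ≤ c) (ht : c ≤ t) : (c - 1) ^ 2 ≤ G0 t := by
  unfold G0
  have : c - 1 ≤ max (t - 1) 0 := le_max_of_le_left (by linarith)
  exact pow_le_pow_left₀ (by linarith) this 2

section Regularizer

variable {K N L : ℕ} (b : Fin L → Fin K → ℂ) {ρ : ℝ} (μ di : ℝ) (hi : Fin K → ℂ) (xi : Fin N → ℂ)

lemma Gi_nonneg (hρ : 0 ≤ ρ) : 0 ≤ Gi b ρ μ di hi xi := by
  unfold Gi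
  have := G0_nonneg (vnormSq hi / (2 * di))
  have := G0_nonneg (vnormSq xi / (2 * di))
  have := Finset.sum_nonneg fun l (_ : l ∈ univ) =>
    G0_nonneg ((L : ℝ) * ‖vinner (b l) hi‖ ^ 2 / (8 * di * μ ^ 2))
  positivity

lemma mul_G0_left_le_Gi (hρ : 0 ≤ ρ) :
    ρ * G0 (vnormSq hi / (2 * di)) ≤ Gi b ρ μ di hi xi := by
  unfold Gi
  have := G0_nonneg (vnormSq xi / (2 * di))
  have := Finset.sum_nonneg fun l (_ : l ∈ univ) =>
    G0_nonneg ((L : ℝ) * ‖vinner (b l) hi‖ ^ 2 / (8 * di * μ ^ 2))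
  gcongr
  linarith

lemma mul_G0_right_le_Gi (hρ : 0 ≤ ρ) :
    ρ * G0 (vnormSq xi / (2 * di)) ≤ Gi b ρ μ di hi xi := by
  unfold Gi
  have := G0_nonneg (vnormSq hi / (2 * di))
  have := Finset.sum_nonneg fun l (_ : l ∈ univ) =>
    G0_nonneg ((L : ℝ) * ‖vinner (b l) hi‖ ^ 2 / (8 * di * μ ^ 2))
  gcongr
  linarith

lemma mul_G0_incoherence_le_Gi (hρ : 0 ≤ ρ) (l : Fin L) :
    ρ * G0 ((L : ℝ) * ‖vinner (b l) hi‖ ^ 2 / (8 * di * μ ^ 2)) ≤ Gi b ρ μ di hi xi := by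
  unfold Gi
  have := G0_nonneg (vnormSq hi / (2 * di))
  have := G0_nonneg (vnormSq xi / (2 * di))
  have := Finset.single_le_sum (fun l' (_ : l' ∈ univ) =>
    G0_nonneg ((L : ℝ) * ‖vinner (b l') hi‖ ^ 2 / (8 * di * μ ^ 2))) (mem_univ l)
  gcongr
  linarith

end Regularizer

lemma Gi_le_Ftil {K N L s : ℕ} (b : Fin L → Fin K → ℂ) (a : Fin s → Fin L → Fin N → ℂ)
    (h0 : Fin s → Fin K → ℂ) (x0 : Fin s → Fin N → ℂ) (e : Fin L → ℂ)
    {ρ : ℝ} (hρ : 0 ≤ ρ) (μ : ℝ) (dd : Fin s → ℝ)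
    (h : Fin s → Fin K → ℂ) (x : Fin s → Fin N → ℂ) (i : Fin s) :
    Gi b ρ μ (dd i) (h i) (x i) ≤ Ftil b a h0 x0 e ρ μ dd h x := by
  have hG : Gi b ρ μ (dd i) (h i) (x i) ≤ Greg b ρ μ dd h x :=
    Finset.single_le_sum (fun j _ => Gi_nonneg b μ (dd j) (h j) (x j) hρ) (mem_univ i)
  have hF : 0 ≤ Fobj b a h0 x0 e h x := vnormSq_nonneg _
  unfold Ftil
  linarith

lemma dtot_pos {s : ℕ} [Nonempty (Fin s)] {d0 : Fin s → ℝ} (hd0 : ∀ i, 0 < d0 i) :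
    0 < dtot d0 :=
  Real.sqrt_pos.mpr (Finset.sum_pos (fun i _ => pow_pos (hd0 i) 2) univ_nonempty)

lemma one_le_kappa {s : ℕ} [Nonempty (Fin s)] {d0 : Fin s → ℝ} (hd0 : ∀ i, 0 < d0 i) :
    1 ≤ kappa d0 := by
  obtain ⟨imin, hmin⟩ := Finite.exists_min d0
  have hinf : ⨅ i, d0 i = d0 imin :=
    le_antisymm (ciInf_le (Finite.bddBelow_range d0) imin) (le_ciInf hmin)
  rw [kappa, hinf, le_div_iff₀ (hd0 imin), one_mul]
  exact le_ciSup (Finite.bddAbove_range d0) imin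

lemma sq_mul_div_le_div_675 {ε D s κ : ℝ} (hε : 0 < ε) (hε15 : ε ≤ 1 / 15)
    (hs : 1 ≤ s) (hκ : 1 ≤ κ) :
    ε ^ 2 * D ^ 2 / (3 * s * κ ^ 2) ≤ D ^ 2 / 675 := by
  have hε2 : ε ^ 2 ≤ 1 / 225 := by nlinarith
  have h3 : 3 ≤ 3 * s * κ ^ 2 := by nlinarith
  rw [div_le_div_iff₀ (by positivity) (by norm_num)]
  nlinarith [mul_le_mul_of_nonneg_right hε2 (sq_nonneg D),
    mul_le_mul_of_nonneg_right h3 (sq_nonneg D)]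

lemma lt_of_mul_G0_le {ρ D E t : ℝ} (hD : 0 < D) (hE : 0 ≤ E) (hρ : 0.81 * D ^ 2 + 2 * E ≤ ρ)
    (ht : ρ * G0 t ≤ D ^ 2 / 675 + E) : t < 20 / 11 := by
  by_contra! hge
  have hG : (9 / 11 : ℝ) ^ 2 ≤ G0 t := by
    have := sq_sub_one_le_G0 (by norm_num) hge
    norm_num at this ⊢
    exact this
  nlinarith [mul_le_mul_of_nonneg_left hG (by nlinarith : (0 : ℝ) ≤ ρ), mul_pos hD hD]

lemma lt_two_mul_of_div_lt {c di d0i v : ℝ} (hc : 0 < c) (hdi : 0 < di)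
    (hdi' : di ≤ 1.1 * d0i) (hv : v / (c * di) < 20 / 11) : v < 2 * c * d0i := by
  rw [div_lt_iff₀ (by positivity)] at hv
  nlinarith

lemma sqrt_mul_le_of_sq_le {L z d μ : ℝ} (hz : 0 ≤ z) (hd : 0 ≤ d) (hμ : 0 ≤ μ)
    (h : L * z ^ 2 ≤ 16 * d * μ ^ 2) : Real.sqrt L * z ≤ 4 * Real.sqrt d * μ := by
  rcases le_or_gt L 0 with hL | hL
  · rw [Real.sqrt_eq_zero'.mpr hL, zero_mul]
    positivity
  rw [← pow_le_pow_iff_left₀ (by positivity) (by positivity) two_ne_zero, mul_pow, mul_pow,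
    mul_pow, Real.sq_sqrt hL.le, Real.sq_sqrt hd]
  linarith

theorem statement0_general
    {K N L s : ℕ}
    (b : Fin L → Fin K → ℂ)
    (a : Fin s → Fin L → Fin N → ℂ)
    (h0 : Fin s → Fin K → ℂ) (x0 : Fin s → Fin N → ℂ)
    (d0 : Fin s → ℝ) (hd0 : ∀ i, 0 < d0 i)
    (e : Fin L → ℂ) (μ ρ d ε : ℝ) (dd : Fin s → ℝ)
    (hμ : 0 < μ) (hε : 0 < ε) (hε15 : ε ≤ 1 / 15)
    (hdd : ∀ i, 0.9 * d0 i ≤ dd i ∧ dd i ≤ 1.1 * d0 i)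
    (hdlow : 0.9 * dtot d0 ≤ d)
    (hρ : d ^ 2 + 2 * vnormSq e ≤ ρ) :
    ∀ (h : Fin s → Fin K → ℂ) (x : Fin s → Fin N → ℂ),
      Ftil b a h0 x0 e ρ μ dd h x
          ≤ ε ^ 2 * dtot d0 ^ 2 / (3 * (s : ℝ) * kappa d0 ^ 2) + vnormSq e →
      inNd d0 h x ∧ inNmu b d0 μ h := by
  intro h x hF
  have hρ0 : 0 ≤ ρ := by nlinarith [vnormSq_nonneg e]
  have hdd0 (i : Fin s) : 0 < dd i := by linarith [hd0 i, (hdd i).1]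
  have harg_lt (i : Fin s) (t : ℝ) (ht : ρ * G0 t ≤ Gi b ρ μ (dd i) (h i) (x i)) :
      t < 20 / 11 := by
    have : Nonempty (Fin s) := ⟨i⟩
    have hD := dtot_pos hd0
    refine lt_of_mul_G0_le (ρ := ρ) hD (vnormSq_nonneg e) (by nlinarith) ?_
    have hs : (1 : ℝ) ≤ s := by exact_mod_cast Fin.pos i
    calc ρ * G0 t ≤ Ftil b a h0 x0 e ρ μ dd h x :=
          ht.trans (Gi_le_Ftil b a h0 x0 e hρ0 μ dd h x i)
      _ ≤ _ := hF
      _ ≤ _ := add_le_add_left (sq_mul_div_le_div_675 hε hε15 hs (one_le_kappa hd0)) _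
  refine ⟨fun i => ⟨?_, ?_⟩, fun i l => ?_⟩
  · have := lt_two_mul_of_div_lt two_pos (hdd0 i) (hdd i).2
      (harg_lt i _ (mul_G0_left_le_Gi b μ (dd i) (h i) (x i) hρ0))
    exact vnorm_le_two_mul_sqrt (by linarith)
  · have := lt_two_mul_of_div_lt two_pos (hdd0 i) (hdd i).2
      (harg_lt i _ (mul_G0_right_le_Gi b μ (dd i) (h i) (x i) hρ0))
    exact vnorm_le_two_mul_sqrt (by linarith)
  · have harg := harg_lt i _ (mul_G0_incoherence_le_Gi b μ (dd i) (h i) (x i) hρ0 l)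
    rw [mul_right_comm] at harg
    have := lt_two_mul_of_div_lt (by positivity) (hdd0 i) (hdd i).2 harg
    exact sqrt_mul_le_of_sq_le (norm_nonneg _) (hd0 i).le hμ.le (by linarith)

/-- `𝒩_F̃ ⊆ 𝒩_d ∩ 𝒩_μ`. -/
theorem statement0
    {K N L s : ℕ} (hK : 0 < K) (hN : 0 < N) (hL : 0 < L) (hs : 0 < s)
    (b : Fin L → Fin K → ℂ) (hb : BtBeqI b)
    (a : Fin s → Fin L → Fin N → ℂ)
    (h0 : Fin s → Fin K → ℂ) (x0 : Fin s → Fin N → ℂ)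
    (d0 : Fin s → ℝ) (hd0 : ∀ i, 0 < d0 i)
    (hh0 : ∀ i, vnorm (h0 i) = Real.sqrt (d0 i))
    (hx0 : ∀ i, vnorm (x0 i) = Real.sqrt (d0 i))
    (e : Fin L → ℂ) (μ ρ d ε : ℝ) (dd : Fin s → ℝ)
    (hμ : 0 < μ) (hε : 0 < ε) (hε15 : ε ≤ 1 / 15)
    (hdd : ∀ i, 0.9 * d0 i ≤ dd i ∧ dd i ≤ 1.1 * d0 i)
    (hdlow : 0.9 * dtot d0 ≤ d) (hdhigh : d ≤ 1.1 * dtot d0)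
    (hρ : d ^ 2 + 2 * vnormSq e ≤ ρ) :
    ∀ (h : Fin s → Fin K → ℂ) (x : Fin s → Fin N → ℂ),
      Ftil b a h0 x0 e ρ μ dd h x
          ≤ ε ^ 2 * dtot d0 ^ 2 / (3 * (s : ℝ) * kappa d0 ^ 2) + vnormSq e →
      inNd d0 h x ∧ inNmu b d0 μ h :=
  statement0_general b a h0 x0 d0 hd0 e μ ρ d ε dd hμ hε hε15 hdd hdlow hρ

end RGD
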